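/- arXiv:2307.00254 — 4 statements merged into one kernel-verified Lean document; each statement's English description precedes it below -/
import Mathlib

section
/- Let n ≥ 4 be an integer, set t = tan(π/n), and let λ be a real number with λ ≥ (√3 + t)/(√3 − t). In the Euclidean plane ℝ² = EuclideanSpace ℝ (Fin 2), define the points A = (−1/2, 1/(2t)), B = (1/2, 1/(2t)), P = (−λ/2, λ/(2t)), Q = (λ/2, λ/(2t)), S₁ = (0, 1/(2t) + 1/(2√3)) and S₂ = (0, λ/(2t) − λ/(2√3)). Then: (i) 1/(2t) ≤ 1/(2t) + 1/(2√3) ≤ λ/(2t) − λ/(2√3) ≤ λ/(2t), so that the points M = (0, 1/(2t)), S₁, S₂, N = (0, λ/(2t)) occur in this order on the segment MN; (ii) the (unoriented) angles satisfy ∠ A S₁ B = 2π/3 and ∠ P S₂ Q = 2π/3; and (iii) dist A S₁ + dist B S₁ + dist S₁ S₂ + dist P S₂ + dist Q S₂ = (λ − 1)/(2·tan(π/n)) + √3·(λ + 1)/2. -/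
open Real EuclideanGeometry

noncomputable section

abbrev Pt : Type := EuclideanSpace ℝ (Fin 2)

/-- Vertex `A` of the trapezoid. -/
noncomputable def trapA (t : ℝ) : Pt := !₂[-(1 / 2), 1 / (2 * t)]

/-- Vertex `B` of the trapezoid. -/
noncomputable def trapB (t : ℝ) : Pt := !₂[1 / 2, 1 / (2 * t)]

/-- Vertex `P` of the trapezoid. -/
noncomputable def trapP (t lam : ℝ) : Pt := !₂[-(lam / 2), lam / (2 * t)]

/-- Vertex `Q` of the trapezoid. -/
noncomputable def trapQ (t lam : ℝ) : Pt := !₂[lam / 2, lam / (2 * t)]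

/-- The Steiner point `S₁` of the vertical fork. -/
noncomputable def trapS₁ (t : ℝ) : Pt := !₂[0, 1 / (2 * t) + 1 / (2 * Real.sqrt 3)]

/-- The Steiner point `S₂` of the vertical fork. -/
noncomputable def trapS₂ (t lam : ℝ) : Pt := !₂[0, lam / (2 * t) - lam / (2 * Real.sqrt 3)]

/-! Both Steiner points lie on the symmetry axis at the height from which the two adjacent
vertices are seen along lines inclined at `π/6` to the parallel sides. A leg with horizontal
extent `x/2` then has vertical extent `x/(2√3)` and length `x/√3`, and the two legs meet at
`2π/3`. Since `n ≥ 4`, `t = tan(π/n) < √3`, so the hypothesis on `λ` is, after clearing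
denominators, exactly the statement that `S₁` lies below `S₂`; summing the five lengths gives
the formula. -/

lemma tan_pi_div_natCast_pos {n : ℕ} (hn : 2 < n) : 0 < tan (π / n) := by
  have hn' : (2 : ℝ) < n := by exact_mod_cast hn
  apply tan_pos_of_pos_of_lt_pi_div_two (by positivity)
  exact div_lt_div_of_pos_left pi_pos two_pos hn'

lemma tan_pi_div_natCast_lt_sqrt_three {n : ℕ} (hn : 3 < n) : tan (π / n) < √3 := by
  have hn' : (3 : ℝ) < n := by exact_mod_cast hn
  have hpos : 0 < π / n := div_pos pi_pos (by linarith)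
  rw [← tan_pi_div_three]
  exact tan_lt_tan_of_lt_of_lt_pi_div_two (by linarith [pi_pos]) (by linarith [pi_pos])
    (div_lt_div_of_pos_left pi_pos three_pos hn')

lemma arccos_neg_half : arccos (-(1 / 2)) = 2 * π / 3 := by
  have hcos : cos (2 * π / 3) = -(1 / 2) := by
    rw [show 2 * π / 3 = π - π / 3 by ring, cos_pi_sub, cos_pi_div_three]
  rw [← hcos, arccos_cos (by positivity) (by linarith [pi_pos])]

lemma half_sq_eq_three_mul_sq (x : ℝ) : (x / 2) ^ 2 = 3 * (x / (2 * √3)) ^ 2 := by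
  field_simp
  rw [sq_sqrt three_pos.le]

section Vec2

variable (a b c d : ℝ)

lemma vec2_sub : (!₂[a, b] : Pt) - !₂[c, d] = !₂[a - c, b - d] := by
  simp [← WithLp.toLp_sub]

lemma inner_vec2 : inner ℝ (!₂[a, b] : Pt) !₂[c, d] = a * c + b * d := by
  simp [PiLp.inner_apply, Fin.sum_univ_two, mul_comm]

lemma norm_vec2 : ‖(!₂[a, b] : Pt)‖ = √(a ^ 2 + b ^ 2) := by
  simp [EuclideanSpace.norm_eq, Fin.sum_univ_two]

lemma norm_vec2_zero_left : ‖(!₂[0, b] : Pt)‖ = |b| := by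
  rw [norm_vec2, zero_pow two_ne_zero, zero_add, sqrt_sq_eq_abs]

variable {a c}

lemma norm_vec2_of_sq_eq (h : a ^ 2 = 3 * c ^ 2) : ‖(!₂[a, c] : Pt)‖ = 2 * |c| := by
  rw [norm_vec2, h, show 3 * c ^ 2 + c ^ 2 = (2 * |c|) ^ 2 by rw [mul_pow, sq_abs]; ring,
    sqrt_sq (by positivity)]

lemma angle_vec2_of_sq_eq (hc : c ≠ 0) (h : a ^ 2 = 3 * c ^ 2) :
    InnerProductGeometry.angle (!₂[-a, c] : Pt) !₂[a, c] = 2 * π / 3 := by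
  have hc' : 0 < |c| := abs_pos.2 hc
  rw [InnerProductGeometry.angle, inner_vec2, norm_vec2_of_sq_eq (by rwa [neg_sq]),
    norm_vec2_of_sq_eq h, ← arccos_neg_half]
  congr 1
  field_simp
  rw [sq_abs]
  linarith

end Vec2

lemma trapA_sub_trapS₁ (t : ℝ) : trapA t - trapS₁ t = !₂[-(1 / 2), -(1 / (2 * √3))] := by
  rw [trapA, trapS₁, vec2_sub, sub_zero, sub_add_cancel_left]

lemma trapB_sub_trapS₁ (t : ℝ) : trapB t - trapS₁ t = !₂[1 / 2, -(1 / (2 * √3))] := by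
  rw [trapB, trapS₁, vec2_sub, sub_zero, sub_add_cancel_left]

lemma trapP_sub_trapS₂ (t lam : ℝ) :
    trapP t lam - trapS₂ t lam = !₂[-(lam / 2), lam / (2 * √3)] := by
  rw [trapP, trapS₂, vec2_sub, sub_zero, sub_sub_cancel]

lemma trapQ_sub_trapS₂ (t lam : ℝ) :
    trapQ t lam - trapS₂ t lam = !₂[lam / 2, lam / (2 * √3)] := by
  rw [trapQ, trapS₂, vec2_sub, sub_zero, sub_sub_cancel]

lemma trapS₁_sub_trapS₂ (t lam : ℝ) : trapS₁ t - trapS₂ t lam =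
    !₂[0, 1 / (2 * t) + 1 / (2 * √3) - (lam / (2 * t) - lam / (2 * √3))] := by
  rw [trapS₁, trapS₂, vec2_sub, sub_zero]

lemma dist_trapA_trapS₁ (t : ℝ) : dist (trapA t) (trapS₁ t) = 1 / √3 := by
  rw [dist_eq_norm, trapA_sub_trapS₁,
    norm_vec2_of_sq_eq (by rw [neg_sq, neg_sq]; exact half_sq_eq_three_mul_sq 1), abs_neg,
    abs_of_pos (by positivity)]
  ring

lemma dist_trapB_trapS₁ (t : ℝ) : dist (trapB t) (trapS₁ t) = 1 / √3 := by
  rw [dist_eq_norm, trapB_sub_trapS₁,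
    norm_vec2_of_sq_eq (by rw [neg_sq]; exact half_sq_eq_three_mul_sq 1), abs_neg,
    abs_of_pos (by positivity)]
  ring

lemma dist_trapP_trapS₂ (t : ℝ) {lam : ℝ} (hlam : 0 ≤ lam) :
    dist (trapP t lam) (trapS₂ t lam) = lam / √3 := by
  rw [dist_eq_norm, trapP_sub_trapS₂,
    norm_vec2_of_sq_eq (by rw [neg_sq]; exact half_sq_eq_three_mul_sq lam),
    abs_of_nonneg (by positivity)]
  ring

lemma dist_trapQ_trapS₂ (t : ℝ) {lam : ℝ} (hlam : 0 ≤ lam) :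
    dist (trapQ t lam) (trapS₂ t lam) = lam / √3 := by
  rw [dist_eq_norm, trapQ_sub_trapS₂, norm_vec2_of_sq_eq (half_sq_eq_three_mul_sq lam),
    abs_of_nonneg (by positivity)]
  ring

lemma dist_trapS₁_trapS₂ {t lam : ℝ}
    (h : 1 / (2 * t) + 1 / (2 * √3) ≤ lam / (2 * t) - lam / (2 * √3)) :
    dist (trapS₁ t) (trapS₂ t lam) =
      lam / (2 * t) - lam / (2 * √3) - (1 / (2 * t) + 1 / (2 * √3)) := by
  rw [dist_eq_norm, trapS₁_sub_trapS₂, norm_vec2_zero_left, abs_sub_comm,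
    abs_of_nonneg (sub_nonneg.2 h)]

lemma angle_trapA_trapS₁_trapB (t : ℝ) : ∠ (trapA t) (trapS₁ t) (trapB t) = 2 * π / 3 := by
  rw [EuclideanGeometry.angle, vsub_eq_sub, vsub_eq_sub, trapA_sub_trapS₁, trapB_sub_trapS₁]
  exact angle_vec2_of_sq_eq (neg_ne_zero.2 (by positivity))
    (by rw [neg_sq]; exact half_sq_eq_three_mul_sq 1)

lemma angle_trapP_trapS₂_trapQ (t : ℝ) {lam : ℝ} (hlam : lam ≠ 0) :
    ∠ (trapP t lam) (trapS₂ t lam) (trapQ t lam) = 2 * π / 3 := by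
  rw [EuclideanGeometry.angle, vsub_eq_sub, vsub_eq_sub, trapP_sub_trapS₂, trapQ_sub_trapS₂]
  exact angle_vec2_of_sq_eq (by positivity) (half_sq_eq_three_mul_sq lam)

lemma steiner_heights_le {t lam : ℝ} (ht : 0 < t) (h : √3 + t ≤ lam * (√3 - t)) :
    1 / (2 * t) + 1 / (2 * √3) ≤ lam / (2 * t) - lam / (2 * √3) := by
  rw [← sub_nonneg, show lam / (2 * t) - lam / (2 * √3) - (1 / (2 * t) + 1 / (2 * √3)) =
    (lam * (√3 - t) - (√3 + t)) / (2 * t * √3) by field_simp]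
  exact div_nonneg (by linarith) (by positivity)

/-- Existence and length of the vertical fork of the isosceles trapezoid with parallel
sides `1` and `λ` and apex angle `2π/n`:  (i) the Steiner points `S₁`, `S₂` lie on
the segment `MN` in the order `M, S₁, S₂, N`; (ii) the angles `∠ A S₁ B` and
`∠ P S₂ Q` are `2π/3`; (iii) the total length of the fork is
`(λ − 1)/(2 tan(π/n)) + √3 (λ + 1)/2`. -/
theorem vertical_fork (n : ℕ) (hn : 4 ≤ n) (t lam : ℝ) (ht : t = Real.tan (π / n))
    (hlam : (Real.sqrt 3 + t) / (Real.sqrt 3 - t) ≤ lam) :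
    (1 / (2 * t) ≤ 1 / (2 * t) + 1 / (2 * Real.sqrt 3) ∧
      1 / (2 * t) + 1 / (2 * Real.sqrt 3) ≤ lam / (2 * t) - lam / (2 * Real.sqrt 3) ∧
      lam / (2 * t) - lam / (2 * Real.sqrt 3) ≤ lam / (2 * t)) ∧
    (EuclideanGeometry.angle (trapA t) (trapS₁ t) (trapB t) = 2 * π / 3 ∧
      EuclideanGeometry.angle (trapP t lam) (trapS₂ t lam) (trapQ t lam) = 2 * π / 3) ∧
    dist (trapA t) (trapS₁ t) + dist (trapB t) (trapS₁ t) +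
        dist (trapS₁ t) (trapS₂ t lam) + dist (trapP t lam) (trapS₂ t lam) +
        dist (trapQ t lam) (trapS₂ t lam) =
      (lam - 1) / (2 * Real.tan (π / n)) + Real.sqrt 3 * (lam + 1) / 2 := by
  rw [← ht]
  have ht0 : 0 < t := ht ▸ tan_pi_div_natCast_pos (by omega)
  have hts : 0 < √3 - t := sub_pos.2 (ht ▸ tan_pi_div_natCast_lt_sqrt_three (by omega))
  have hlam' : √3 + t ≤ lam * (√3 - t) := (div_le_iff₀ hts).1 hlam
  have hlam0 : 0 < lam := pos_of_mul_pos_left ((add_pos (by positivity) ht0).trans_le hlam') hts.le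
  have hS := steiner_heights_le ht0 hlam'
  refine ⟨⟨le_add_of_nonneg_right (by positivity), hS, sub_le_self _ (by positivity)⟩,
    ⟨angle_trapA_trapS₁_trapB t, angle_trapP_trapS₂_trapQ t hlam0.ne'⟩, ?_⟩
  rw [dist_trapA_trapS₁, dist_trapB_trapS₁, dist_trapS₁_trapS₂ hS, dist_trapP_trapS₂ t hlam0.le,
    dist_trapQ_trapS₂ t hlam0.le]
  field_simp
  linear_combination -(t * (lam + 1)) * mul_self_sqrt three_pos.le

end
end

section
/- Let P, S, Q be points in the Euclidean plane with ∠ P S Q = 2π/3 (unoriented angle at S). Then the convex hull of {P, S, Q} is contained in the union of the two closed lunes on the segments PS and QS; that is, convexHull ℝ {P, S, Q} ⊆ (closedBall P (dist P S) ∩ closedBall S (dist P S)) ∪ (closedBall Q (dist Q S) ∩ closedBall S (dist Q S)). -/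
open Real EuclideanGeometry Metric RealInnerProductSpace

noncomputable section

lemma key_lune {E : Type*} [NormedAddCommGroup E] [InnerProductSpace ℝ E] (u v : E)
    (hin : ⟪u, v⟫ = -(‖u‖ * ‖v‖) / 2) (a c : ℝ) (ha : 0 ≤ a) (hc : 0 ≤ c)
    (hac : a + c ≤ 1) (hle : c * ‖v‖ ≤ a * ‖u‖) :
    ‖a • u + c • v‖ ≤ ‖u‖ ∧ ‖a • u + c • v - u‖ ≤ ‖u‖ := by
  have hU := norm_nonneg u
  have hV := norm_nonneg v
  have h1 : ‖a • u + c • v‖ ^ 2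
      = a ^ 2 * ‖u‖ ^ 2 + 2 * (a * c * ⟪u, v⟫) + c ^ 2 * ‖v‖ ^ 2 := by
    rw [norm_add_sq_real, norm_smul, norm_smul, real_inner_smul_left, real_inner_smul_right]
    simp [abs_of_nonneg ha, abs_of_nonneg hc, mul_pow]
    ring
  have h2 : a • u + c • v - u = (a - 1) • u + c • v := by module
  have h3 : ‖(a - 1) • u + c • v‖ ^ 2
      = (a - 1) ^ 2 * ‖u‖ ^ 2 + 2 * ((a - 1) * c * ⟪u, v⟫) + c ^ 2 * ‖v‖ ^ 2 := by
    rw [norm_add_sq_real, norm_smul, norm_smul, real_inner_smul_left, real_inner_smul_right]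
    rw [Real.norm_eq_abs, Real.norm_eq_abs, mul_pow, mul_pow, sq_abs, sq_abs]
    ring
  rw [hin] at h1 h3
  have ha1 : a ≤ 1 := by linarith
  have hqU : c * ‖v‖ ≤ ‖u‖ := le_trans hle (by nlinarith)
  constructor
  · nlinarith [norm_nonneg (a • u + c • v),
      mul_nonneg (mul_nonneg hc hV) (sub_nonneg.mpr hle),
      mul_nonneg (mul_nonneg ha (sub_nonneg.mpr ha1)) (sq_nonneg ‖u‖),
      mul_nonneg (sub_nonneg.mpr ha1) (sq_nonneg ‖u‖)]
  · rw [h2]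
    nlinarith [norm_nonneg ((a - 1) • u + c • v),
      mul_nonneg (mul_nonneg hc hV) (sub_nonneg.mpr hle),
      mul_nonneg (mul_nonneg (sub_nonneg.mpr ha1) hU) (sub_nonneg.mpr hle),
      mul_nonneg (mul_nonneg ha hU) (sub_nonneg.mpr hqU)]

/-- If `∠ P S Q = 2π/3`, then the convex hull of `{P, S, Q}` is contained in the
union of the closed lunes on the segments `PS` and `QS`. -/
theorem triangle_subset_lunes (P S Q : Pt)
    (h : EuclideanGeometry.angle P S Q = 2 * π / 3) :
    convexHull ℝ {P, S, Q} ⊆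
      (closedBall P (dist P S) ∩ closedBall S (dist P S)) ∪
        (closedBall Q (dist Q S) ∩ closedBall S (dist Q S)) := by
  set u : Pt := P - S with hu
  set v : Pt := Q - S with hv
  have hcos : Real.cos (2 * π / 3) = -(1 / 2) := by
    rw [show (2 * π / 3) = π - π / 3 by ring, Real.cos_pi_sub, Real.cos_pi_div_three]
  have hang : EuclideanGeometry.angle P S Q = InnerProductGeometry.angle u v := by
    rw [EuclideanGeometry.angle, hu, hv]; simp [vsub_eq_sub]
  have hin : ⟪u, v⟫ = -(‖u‖ * ‖v‖) / 2 := by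
    rw [← InnerProductGeometry.cos_angle_mul_norm_mul_norm, ← hang, h, hcos]; ring
  have hin' : ⟪v, u⟫ = -(‖v‖ * ‖u‖) / 2 := by
    rw [real_inner_comm, hin]; ring
  intro x hx
  rw [show ({P, S, Q} : Set Pt) = insert P {S, Q} by rfl,
    convexHull_insert (by simp), convexHull_pair] at hx
  rw [mem_convexJoin] at hx
  obtain ⟨p, hp, z, hz, hxz⟩ := hx
  obtain rfl : P = p := hp.symm
  obtain ⟨s, t, hs, ht, hst, rfl⟩ := hz
  obtain ⟨a, b, ha, hb, hab, rfl⟩ := hxz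
  set α := a with hα
  set γ := b * t with hγ
  have hγ0 : 0 ≤ γ := mul_nonneg hb ht
  have hsum : α + γ ≤ 1 := by nlinarith
  have hxS : a • P + b • (s • S + t • Q) - S = α • u + γ • v := by
    rw [hα, hγ, hu, hv]
    have hb' : b = 1 - a := by linarith
    have hs' : s = 1 - t := by linarith
    rw [hb', hs']; module
  have hxP : a • P + b • (s • S + t • Q) - P = α • u + γ • v - u := by
    rw [← hxS, hu]; abel
  have hxQ : a • P + b • (s • S + t • Q) - Q = γ • v + α • u - v := by
    rw [show γ • v + α • u - v = (α • u + γ • v) - v by abel, ← hxS, hv]; abel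
  have hPS : dist P S = ‖u‖ := by rw [dist_eq_norm, hu]
  have hQS : dist Q S = ‖v‖ := by rw [dist_eq_norm, hv]
  by_cases hcase : γ * ‖v‖ ≤ α * ‖u‖
  · obtain ⟨k1, k2⟩ := key_lune u v hin α γ ha hγ0 hsum hcase
    left
    constructor
    · rw [mem_closedBall, dist_eq_norm, hxP, hPS]; exact k2
    · rw [mem_closedBall, dist_eq_norm, hxS, hPS]; exact k1
  · push_neg at hcase
    obtain ⟨k1, k2⟩ := key_lune v u hin' γ α hγ0 ha (by linarith) hcase.le
    right
    constructor
    · rw [mem_closedBall, dist_eq_norm, hxQ, hQS]; exact k2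
    · rw [mem_closedBall, dist_eq_norm, hxS, hQS]
      rw [show α • u + γ • v = γ • v + α • u by abel]; exact k1

end
end

section
/- For every integer n ≥ 13, one has (√3 + tan(π/n))/(√3 − tan(π/n)) ≤ 1/(1 − 4·sin(π/n)); that is, the threshold λ₁ = 1/(1 − 4 sin(π/n)) is at least the vertical-fork threshold λ_v = (√3 + tan(π/n))/(√3 − tan(π/n)). -/
open Real

/-- For every integer `n ≥ 13`,
`(√3 + tan(π/n))/(√3 − tan(π/n)) ≤ 1/(1 − 4 sin(π/n))`;
i.e. the threshold `λ₁` is at least the vertical-fork threshold `λ_v`. -/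
theorem lambda_v_le_lambda_one (n : ℕ) (hn : 13 ≤ n) :
    (Real.sqrt 3 + Real.tan (π / n)) / (Real.sqrt 3 - Real.tan (π / n)) ≤
      1 / (1 - 4 * Real.sin (π / n)) := by
  set x := π / n with hxdef
  have hn0 : (0:ℝ) < n := by positivity
  have hx0 : 0 < x := div_pos Real.pi_pos hn0
  have hx14 : x < 1/4 := by
    rw [hxdef, div_lt_iff₀ hn0]
    have : (13:ℝ) ≤ n := by exact_mod_cast hn
    nlinarith [Real.pi_lt_d2]
  have hs0 : 0 < Real.sin x := Real.sin_pos_of_pos_of_lt_pi hx0 (by nlinarith [Real.pi_gt_three])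
  have hs14 : Real.sin x < 1/4 := lt_of_le_of_lt (Real.sin_le hx0.le) hx14
  have hcos : (31:ℝ)/32 ≤ Real.cos x := by
    have := Real.one_sub_sq_div_two_le_cos (x := x)
    nlinarith
  have hc0 : (0:ℝ) < Real.cos x := by linarith
  have htan : Real.tan x = Real.sin x / Real.cos x := Real.tan_eq_sin_div_cos x
  have hts : Real.tan x * Real.cos x = Real.sin x := by
    rw [htan]; field_simp
  have ht0 : 0 < Real.tan x := by rw [htan]; positivity
  have hsq3 : (1:ℝ) ≤ Real.sqrt 3 := by
    rw [show (1:ℝ) = Real.sqrt 1 from (Real.sqrt_one).symm]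
    exact Real.sqrt_le_sqrt (by norm_num)
  have ht1 : Real.tan x < 1 := by
    rw [htan, div_lt_one hc0]; linarith
  have hd1 : 0 < Real.sqrt 3 - Real.tan x := by linarith
  have hd2 : 0 < 1 - 4 * Real.sin x := by linarith
  rw [div_le_div_iff₀ hd1 hd2]
  nlinarith [mul_pos hs0 ht0, mul_le_mul_of_nonneg_left hcos (show (0:ℝ) ≤ 2 * Real.tan x by linarith)]
end

section
/- Let T be a finite tree (a connected acyclic simple graph on a finite vertex type), and let 𝔽 be a finite nonempty family of subgraphs of T such that: each member of 𝔽 is connected and contains at least one edge; the edge sets of the members of 𝔽 partition the edge set of T; and any two distinct members of 𝔽 share at most one vertex (where the vertex set of a member is the set of endpoints of its edges). Then there exists a member F ∈ 𝔽 such that the intersection of the vertex set of F with the union of the vertex sets of all the other members of 𝔽 contains at most one vertex. -/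
/-!
Let `d v` be the number of members whose support contains `v`. Each member is a tree, so
it has one more vertex than edges; as the members partition the edges of the tree `G`,
`∑ v, d v = #𝔽 + |V| - 1`. Since every vertex is covered, `d v ≥ 1`. If every member had
two vertices shared with other members, counting incidences at vertices with `d v ≥ 2`
would give `2 * #𝔽 ≤ ∑_{d v ≥ 2} d v ≤ 2 * ∑ v, (d v - 1) < 2 * #𝔽`.
-/

open scoped Classical

open Finset SimpleGraph

namespace Finset

variable {ι V : Type*} (𝔽 : Finset ι) (s : ι → Set V)

theorem sum_card_filter_mem_eq_sum_card_filter_mem (T : Finset V) :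
    ∑ i ∈ 𝔽, #{v ∈ T | v ∈ s i} = ∑ v ∈ T, #{i ∈ 𝔽 | v ∈ s i} :=
  sum_card_bipartiteAbove_eq_sum_card_bipartiteBelow (fun i v => v ∈ s i)

theorem sum_ncard_eq_sum_card_filter_mem [Fintype V] :
    ∑ i ∈ 𝔽, (s i).ncard = ∑ v, #{i ∈ 𝔽 | v ∈ s i} := by
  rw [← sum_card_filter_mem_eq_sum_card_filter_mem]
  exact sum_congr rfl fun i _ => by simp [Set.ncard_eq_toFinset_card']

theorem two_le_card_filter_mem_of_mem_inter_biUnion {i : ι} (hi : i ∈ 𝔽) {v : V}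
    (hv : v ∈ s i ∩ ⋃ j ∈ 𝔽 \ {i}, s j) : 2 ≤ #{j ∈ 𝔽 | v ∈ s j} := by
  obtain ⟨hvi, hv⟩ := hv
  obtain ⟨j, hj, hvj⟩ := Set.mem_iUnion₂.mp hv
  rw [mem_sdiff, mem_singleton] at hj
  calc 2 = #{i, j} := (card_pair (Ne.symm hj.2)).symm
    _ ≤ #{j ∈ 𝔽 | v ∈ s j} := card_le_card <| by
        simp [insert_subset_iff, hi, hvi, hj.1, hvj]

/-- The hypothesis `hcount` says that the point–block incidence graph has fewer edges than
vertices, as it does when that graph is a forest. -/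
theorem exists_inter_biUnion_sdiff_subsingleton [Fintype V] (hcover : ∀ v, ∃ i ∈ 𝔽, v ∈ s i)
    (hcount : ∑ i ∈ 𝔽, (s i).ncard < #𝔽 + Fintype.card V) :
    ∃ i ∈ 𝔽, (s i ∩ ⋃ j ∈ 𝔽 \ {i}, s j).Subsingleton := by
  by_contra! hcon
  set d : V → ℕ := fun v => #{i ∈ 𝔽 | v ∈ s i}
  set S : Finset V := {v | 2 ≤ d v}
  have hd_pos : ∀ v, 1 ≤ d v := fun v => by
    obtain ⟨i, hi, hvi⟩ := hcover v
    exact card_pos.mpr ⟨i, mem_filter.mpr ⟨hi, hvi⟩⟩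
  have hshared : ∀ i ∈ 𝔽, 2 ≤ #{v ∈ S | v ∈ s i} := fun i hi => by
    obtain ⟨a, ha, b, hb, hab⟩ := hcon i hi
    have hS : ∀ x ∈ s i ∩ ⋃ j ∈ 𝔽 \ {i}, s j, x ∈ ({v ∈ S | v ∈ s i} : Finset V) :=
      fun x hx => mem_filter.mpr
        ⟨mem_filter.mpr ⟨mem_univ x, two_le_card_filter_mem_of_mem_inter_biUnion 𝔽 s hi hx⟩,
          hx.1⟩
    exact one_lt_card.mpr ⟨a, hS a ha, b, hS b hb, hab⟩
  have hpointwise : ∀ v, (if 2 ≤ d v then d v else 0) + 2 ≤ 2 * d v := fun v => by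
    have := hd_pos v
    split_ifs <;> omega
  have : 2 * (#𝔽 + Fintype.card V) < 2 * (#𝔽 + Fintype.card V) :=
    calc 2 * (#𝔽 + Fintype.card V) = ∑ _i ∈ 𝔽, 2 + ∑ _v : V, 2 := by simp; ring
      _ ≤ ∑ i ∈ 𝔽, #{v ∈ S | v ∈ s i} + ∑ _v : V, 2 := by gcongr with i hi; exact hshared i hi
      _ = ∑ v, ((if 2 ≤ d v then d v else 0) + 2) := by
        rw [sum_card_filter_mem_eq_sum_card_filter_mem, sum_filter, sum_add_distrib]
      _ ≤ 2 * ∑ v, d v := by rw [mul_sum]; exact sum_le_sum fun v _ => hpointwise v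
      _ < 2 * (#𝔽 + Fintype.card V) := by rw [← sum_ncard_eq_sum_card_filter_mem]; omega
  exact this.false

end Finset

namespace SimpleGraph.Subgraph

variable {V : Type*} {G : SimpleGraph V} {F : G.Subgraph}

theorem Connected.support_eq_verts (hc : F.Connected) (he : F.edgeSet.Nonempty) :
    F.support = F.verts := by
  refine F.support_subset_verts.antisymm fun v hv => ?_
  obtain ⟨e, he⟩ := he
  induction e with
  | h a b =>
    have hab : F.Adj a b := he
    have : Nontrivial F.verts := ⟨⟨a, hab.fst_mem⟩, ⟨b, hab.snd_mem⟩, by simpa using hab.ne⟩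
    obtain ⟨w, hw⟩ := hc.preconnected.exists_adj_of_nontrivial ⟨v, hv⟩
    exact ⟨w, hw⟩

theorem ncard_edgeSet_coe (F : G.Subgraph) : F.coe.edgeSet.ncard = F.edgeSet.ncard := by
  rw [← F.image_coe_edgeSet_coe,
    Set.ncard_image_of_injective _ (Sym2.map.injective Subtype.val_injective)]

theorem Connected.ncard_support_eq_ncard_edgeSet_add_one [Finite V] (hG : G.IsAcyclic)
    (hc : F.Connected) (he : F.edgeSet.Nonempty) :
    F.support.ncard = F.edgeSet.ncard + 1 := by
  have hcard := (isTree_iff_connected_and_card.mp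
    ⟨Subgraph.connected_iff'.mp hc, hG.subgraph F⟩).2
  rw [Nat.card_coe_set_eq, Nat.card_coe_set_eq, ncard_edgeSet_coe] at hcard
  rw [hc.support_eq_verts he, hcard]

end SimpleGraph.Subgraph

namespace SimpleGraph

variable {V : Type*} {G : SimpleGraph V}

theorem sum_ncard_edgeSet_eq_of_partition [Finite V] (𝔽 : Finset G.Subgraph)
    (hcover : ⋃ F ∈ 𝔽, F.edgeSet = G.edgeSet)
    (hdisj : ∀ F₁ ∈ 𝔽, ∀ F₂ ∈ 𝔽, F₁ ≠ F₂ → F₁.edgeSet ∩ F₂.edgeSet = ∅) :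
    ∑ F ∈ 𝔽, F.edgeSet.ncard = G.edgeSet.ncard := by
  rw [← hcover, ← Finset.set_biUnion_coe, Set.Finite.ncard_biUnion 𝔽.finite_toSet
    (fun F _ => Set.toFinite _), finsum_mem_coe_finset]
  exact fun F₁ h₁ F₂ h₂ hne => Set.disjoint_iff_inter_eq_empty.mpr (hdisj F₁ h₁ F₂ h₂ hne)

theorem Connected.exists_mem_support_of_iUnion_edgeSet_eq [Nontrivial V] (hG : G.Connected)
    {𝔽 : Finset G.Subgraph} (hcover : ⋃ F ∈ 𝔽, F.edgeSet = G.edgeSet) (v : V) :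
    ∃ F ∈ 𝔽, v ∈ F.support := by
  obtain ⟨w, hvw⟩ := hG.preconnected.exists_adj_of_nontrivial v
  have hvw : s(v, w) ∈ ⋃ F ∈ 𝔽, F.edgeSet := hcover ▸ hvw
  obtain ⟨F, hF, hvwF⟩ := Set.mem_iUnion₂.mp hvw
  exact ⟨F, hF, w, hvwF⟩

end SimpleGraph

theorem exists_leaf_full_steiner_subtree_general {V : Type*} [Fintype V]
    (G : SimpleGraph V) (hconn : G.Connected) (hacyc : G.IsAcyclic)
    (𝔽 : Finset G.Subgraph) (hne : 𝔽.Nonempty)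
    (hmem : ∀ F ∈ 𝔽, F.Connected ∧ F.edgeSet.Nonempty)
    (hcover : ⋃ F ∈ 𝔽, SimpleGraph.Subgraph.edgeSet F = G.edgeSet)
    (hdisj : ∀ F₁ ∈ 𝔽, ∀ F₂ ∈ 𝔽, F₁ ≠ F₂ →
      SimpleGraph.Subgraph.edgeSet F₁ ∩ SimpleGraph.Subgraph.edgeSet F₂ = ∅) :
    ∃ F ∈ 𝔽, (F.support ∩ ⋃ F' ∈ 𝔽 \ {F}, SimpleGraph.Subgraph.support F').Subsingleton := by
  obtain ⟨F₀, hF₀⟩ := hne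
  obtain ⟨e, he⟩ := (hmem F₀ hF₀).2
  have : Nontrivial V := by
    induction e with
    | h a b => exact (F₀.adj_sub he).nontrivial
  refine exists_inter_biUnion_sdiff_subsingleton 𝔽 Subgraph.support
    (hconn.exists_mem_support_of_iUnion_edgeSet_eq hcover) ?_
  have htree : G.edgeSet.ncard + 1 = Fintype.card V := by
    rw [← Nat.card_coe_set_eq, ← Nat.card_eq_fintype_card]
    exact (isTree_iff_connected_and_card.mp ⟨hconn, hacyc⟩).2
  calc ∑ F ∈ 𝔽, F.support.ncard = ∑ F ∈ 𝔽, (F.edgeSet.ncard + 1) :=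
        sum_congr rfl fun F hF =>
          (hmem F hF).1.ncard_support_eq_ncard_edgeSet_add_one hacyc (hmem F hF).2
    _ = G.edgeSet.ncard + #𝔽 := by
        rw [sum_add_distrib, sum_ncard_edgeSet_eq_of_partition 𝔽 hcover hdisj, sum_const,
          smul_eq_mul, mul_one]
    _ < #𝔽 + Fintype.card V := by omega

/-- Let `T = (V, G)` be a finite tree and let `𝔽` be a finite nonempty family of
subgraphs of `G` such that each member is connected and has at least one edge, the
edge sets of the members partition the edge set of `G`, and any two distinct members
share at most one vertex (vertex sets being supports, i.e. sets of edge endpoints).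
Then some member `F ∈ 𝔽` meets the union of the supports of all other members in at
most one vertex. -/
theorem exists_leaf_full_steiner_subtree {V : Type*} [Fintype V]
    (G : SimpleGraph V) (hconn : G.Connected) (hacyc : G.IsAcyclic)
    (𝔽 : Finset G.Subgraph) (hne : 𝔽.Nonempty)
    (hmem : ∀ F ∈ 𝔽, F.Connected ∧ F.edgeSet.Nonempty)
    (hcover : ⋃ F ∈ 𝔽, SimpleGraph.Subgraph.edgeSet F = G.edgeSet)
    (hdisj : ∀ F₁ ∈ 𝔽, ∀ F₂ ∈ 𝔽, F₁ ≠ F₂ →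
      SimpleGraph.Subgraph.edgeSet F₁ ∩ SimpleGraph.Subgraph.edgeSet F₂ = ∅)
    (hshare : ∀ F₁ ∈ 𝔽, ∀ F₂ ∈ 𝔽, F₁ ≠ F₂ →
      (F₁.support ∩ F₂.support).Subsingleton) :
    ∃ F ∈ 𝔽, (F.support ∩ ⋃ F' ∈ 𝔽 \ {F}, SimpleGraph.Subgraph.support F').Subsingleton :=
  exists_leaf_full_steiner_subtree_general G hconn hacyc 𝔽 hne hmem hcover hdisj
end
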